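/- Let N ≥ 1, K ≥ 1, and for each i ∈ {1, …, N} let p_i ∈ (0, 1], σ_i > 0, ω̄_i > 0 and π_i ∈ (0, 1] be constants with ∑_{i=1}^N π_i ≤ K; set θ_i = ω̄_i·(1 − p_i·π_i)/(p_i·π_i). On a probability space with a filtration (ℱ_t)_{t≥0}, let Q_{i,t} and ω_{i,t} be real-valued processes such that Q_{i,t} and ω_{i,t+1} are ℱ_t-measurable, Q_{i,0} is square-integrable, each ω_{i,t} is nonnegative and integrable with E[ω_{i,t}] = ω̄_i, ω_{i,t+1} is independent of Q_{i,t}, and ω_{i,t+1}·Q_{i,t}² is integrable. For each t and i, let S_{i,t} be a {0,1}-valued random variable independent of ℱ_t with P(S_{i,t} = 1) = p_i, and let A_{i,t} be square-integrable, independent of the σ-algebra generated by ℱ_t and S_{i,t}, with E[A_{i,t}] = 0 and E[A_{i,t}²] = σ_i². Suppose the scheduling vector U_t = (U_{1,t}, …, U_{N,t}) is ℱ_t-measurable with values in {0,1}^N, satisfies ∑_{i=1}^N U_{i,t} ≤ K, and almost surely maximizes ∑_{i=1}^N (θ_i + ω_{i,t+1})·p_i·Q_{i,t}²·u_i over all u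 ∈ {0,1}^N with ∑_i u_i ≤ K, and that Q_{i,t+1} = (1 − U_{i,t}·S_{i,t})·Q_{i,t} + A_{i,t}. Then limsup_{T→∞} (1/(N·T))·∑_{t=0}^{T−1} ∑_{i=1}^N E[ω_{i,t+1}·Q_{i,t+1}²] ≤ (1/N)·∑_{i=1}^N ω̄_i·σ_i²/(p_i·π_i). -/

import Mathlib

open MeasureTheory ProbabilityTheory Filter Finset Topology

/-!
Lyapunov drift with `L_t = ∑ᵢ θᵢ E[Q_{i,t}²]`. The success indicator `S` and the noise `A` of
slot `t` are independent of `ℱ_t`, so for every nonnegative `ℱ_t`-measurable weight `W`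
`E[W Q_{t+1}²] = E[W Q_t²] - p E[W Q_t² U_t] + E[W] σ²`.
Taking `W = ω_{t+1}` and `W = 1` and writing `r = (θ + ω_{t+1}) p Q_t²`,
`E[ω_{t+1} Q_{t+1}²] + θ E[Q_{t+1}²] = θ E[Q_t²] + E[r π] - E[r U_t] + (ω̄ + θ) σ²`,
and `θ = ω̄ (1 - pπ) / (pπ)` is exactly the weight for which `E[r π] = ω̄ E[Q_t²]` and
`(ω̄ + θ) σ² = ω̄ σ² / (pπ)`. A fractional schedule `π` with `∑ π ≤ K` is beaten by serving the
`K` largest rewards, so the max-weight rule gives `∑ᵢ E[rᵢ (πᵢ - U_{i,t})] ≤ 0`. Hence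
`∑ᵢ E[ω_{i,t+1} Q_{i,t+1}²] + L_{t+1} ≤ L_t + ∑ᵢ ω̄ᵢ σᵢ² / (pᵢ πᵢ)`,
which telescopes since `L ≥ 0`.
-/

theorem Finset.exists_subset_card_eq_forall_sdiff_le {α β : Type*} [DecidableEq α]
    [LinearOrder β] (f : α → β) {k : ℕ} {s : Finset α} (hk : k ≤ #s) :
    ∃ t ⊆ s, #t = k ∧ ∀ i ∈ t, ∀ j ∈ s \ t, f j ≤ f i := by
  induction k generalizing s with
  | zero => exact ⟨∅, empty_subset s, card_empty, by simp⟩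
  | succ k ih =>
    obtain ⟨i₀, hi₀, hmax⟩ := s.exists_max_image f (card_pos.mp (by omega))
    obtain ⟨t, hts, hcard, htop⟩ := ih (s := s.erase i₀) (by rw [card_erase_of_mem hi₀]; omega)
    have hi₀t : i₀ ∉ t := fun h => notMem_erase i₀ s (hts h)
    refine ⟨insert i₀ t, insert_subset hi₀ (hts.trans (erase_subset i₀ s)),
      by rw [card_insert_of_notMem hi₀t, hcard], ?_⟩
    intro i hi j hj
    rw [mem_sdiff, mem_insert, not_or] at hj
    rcases mem_insert.mp hi with rfl | hit
    · exact hmax j hj.1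
    · exact htop i hit j (mem_sdiff.mpr ⟨mem_erase.mpr ⟨hj.2.1, hj.1⟩, hj.2.2⟩)

theorem exists_card_le_sum_mul_le_sum {ι : Type*} [Fintype ι] [DecidableEq ι] {K : ℕ}
    {c π : ι → ℝ} (hc : ∀ i, 0 ≤ c i) (hπ₀ : ∀ i, 0 ≤ π i) (hπ₁ : ∀ i, π i ≤ 1)
    (hπK : ∑ i, π i ≤ K) :
    ∃ t : Finset ι, #t ≤ K ∧ ∑ i, c i * π i ≤ ∑ i ∈ t, c i := by
  obtain ⟨t, -, hcard, htop⟩ :=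
    (univ : Finset ι).exists_subset_card_eq_forall_sdiff_le c (min_le_right K _)
  refine ⟨t, hcard ▸ min_le_left _ _, ?_⟩
  have hrest : ∑ j ∈ univ \ t, c j * π j ≤ ∑ i ∈ t, c i * (1 - π i) := by
    rcases (univ \ t).eq_empty_or_nonempty with hempty | hne
    · rw [hempty, sum_empty]
      exact sum_nonneg fun i _ => mul_nonneg (hc i) (sub_nonneg.mpr (hπ₁ i))
    obtain ⟨j₀, hj₀, hmax⟩ := (univ \ t).exists_max_image c hne
    have htK : #t = K := by
      have : t ≠ univ := fun h => by simp [h] at hne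
      have : #t < #(univ : Finset ι) := card_lt_card (ssubset_univ_iff.mpr this)
      omega
    calc ∑ j ∈ univ \ t, c j * π j ≤ ∑ j ∈ univ \ t, c j₀ * π j :=
          sum_le_sum fun j hj => mul_le_mul_of_nonneg_right (hmax j hj) (hπ₀ j)
      _ = c j₀ * ((∑ i, π i) - ∑ i ∈ t, π i) := by rw [← mul_sum, sum_sdiff_eq_sub (subset_univ t)]
      _ ≤ c j₀ * (K - ∑ i ∈ t, π i) := by gcongr; exact hc j₀
      _ = ∑ i ∈ t, c j₀ * (1 - π i) := by rw [← mul_sum, sum_sub_distrib, sum_const, htK]; simp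
      _ ≤ ∑ i ∈ t, c i * (1 - π i) :=
          sum_le_sum fun i hi =>
            mul_le_mul_of_nonneg_right (htop i hi j₀ hj₀) (sub_nonneg.mpr (hπ₁ i))
  calc ∑ i, c i * π i = ∑ i ∈ t, c i * π i + ∑ j ∈ univ \ t, c j * π j := by
        rw [add_comm, sum_sdiff (subset_univ t)]
    _ ≤ ∑ i ∈ t, c i * π i + ∑ i ∈ t, c i * (1 - π i) := by gcongr
    _ = ∑ i ∈ t, c i := by rw [← sum_add_distrib]; exact sum_congr rfl fun i _ => by ring

theorem sum_mul_le_of_forall_zero_one_le {ι : Type*} [Fintype ι] {K : ℕ}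
    {c π U : ι → ℝ} (hc : ∀ i, 0 ≤ c i) (hπ₀ : ∀ i, 0 ≤ π i) (hπ₁ : ∀ i, π i ≤ 1)
    (hπK : ∑ i, π i ≤ K)
    (hU : ∀ u : ι → ℝ, (∀ i, u i = 0 ∨ u i = 1) → ∑ i, u i ≤ K →
      ∑ i, c i * u i ≤ ∑ i, c i * U i) :
    ∑ i, c i * π i ≤ ∑ i, c i * U i := by
  classical
  obtain ⟨t, htK, hle⟩ := exists_card_le_sum_mul_le_sum hc hπ₀ hπ₁ hπK
  refine hle.trans (le_of_eq_of_le ?_ (hU (fun i => if i ∈ t then 1 else 0)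
    (fun i => by split_ifs <;> simp) (by simpa using htK)))
  simp [mul_ite]

section OneSlot

variable {Ω : Type*} {m m₀ : MeasurableSpace Ω} {μ : Measure Ω}

theorem ae_norm_le_one_of_zero_one {f : Ω → ℝ} (hf : ∀ x, f x = 0 ∨ f x = 1) :
    ∀ᵐ x ∂μ, ‖f x‖ ≤ 1 :=
  Eventually.of_forall fun x => by rcases hf x with h | h <;> simp [h]

theorem MeasureTheory.MemLp.one_sub_mul_mul_add {Q U S A : Ω → ℝ} {q : ENNReal} (hQ : MemLp Q q μ)
    (hA : MemLp A q μ) (hU : AEStronglyMeasurable U μ) (hS : AEStronglyMeasurable S μ)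
    (hU01 : ∀ x, U x = 0 ∨ U x = 1) (hS01 : ∀ x, S x = 0 ∨ S x = 1) :
    MemLp (fun x => (1 - U x * S x) * Q x + A x) q μ := by
  refine (hQ.of_le ((aestronglyMeasurable_const.sub (hU.mul hS)).mul hQ.1)
    (Eventually.of_forall fun x => ?_)).add hA
  rcases hU01 x with h | h <;> rcases hS01 x with h' | h' <;> simp [h, h']

theorem integrable_mul_of_integrable_mul_sq {W Q : Ω → ℝ} (hW : AEStronglyMeasurable W μ)
    (hQ : AEStronglyMeasurable Q μ) (hW₀ : ∀ x, 0 ≤ W x) (hWi : Integrable W μ)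
    (hWQ : Integrable (fun x => W x * Q x ^ 2) μ) :
    Integrable (fun x => W x * Q x) μ := by
  refine ((hWi.add hWQ).div_const 2).mono' (hW.mul hQ) (Eventually.of_forall fun x => ?_)
  have hQ_le : |Q x| ≤ (1 + Q x ^ 2) / 2 := by nlinarith [sq_nonneg (|Q x| - 1), sq_abs (Q x)]
  rw [Real.norm_eq_abs, abs_mul, abs_of_nonneg (hW₀ x)]
  calc W x * |Q x| ≤ W x * ((1 + Q x ^ 2) / 2) := mul_le_mul_of_nonneg_left hQ_le (hW₀ x)
    _ = (W x + W x * Q x ^ 2) / 2 := by ring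

theorem indepFun_comp_of_indep_comap {β : Type*} [MeasurableSpace β] {m' : MeasurableSpace Ω}
    {X : Ω → ℝ} {A : Ω → β} (h : Indep m' (MeasurableSpace.comap A inferInstance) μ)
    (hX : Measurable[m'] X) {g : β → ℝ} (hg : Measurable g) :
    IndepFun X (fun x => g (A x)) μ := by
  rw [IndepFun_iff_Indep]
  exact indep_of_indep_of_le_right (indep_of_indep_of_le_left h hX.comap_le)
    (hg.comp (comap_measurable A)).comap_le

theorem integral_eq_measureReal_of_zero_one {S : Ω → ℝ} (hS : Measurable S)
    (hS01 : ∀ x, S x = 0 ∨ S x = 1) : ∫ x, S x ∂μ = μ.real {x | S x = 1} := by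
  have hS_ind : S = {x | S x = 1}.indicator 1 := by
    funext x
    rcases hS01 x with h | h <;> simp [h]
  calc ∫ x, S x ∂μ = ∫ x, {x | S x = 1}.indicator 1 x ∂μ := by rw [← hS_ind]
    _ = μ.real {x | S x = 1} := integral_indicator_one (hS (measurableSet_singleton 1))

theorem integral_mul_add_sq_of_indep [IsFiniteMeasure μ] {m' : MeasurableSpace Ω}
    (hm' : m' ≤ m₀) {W Y A : Ω → ℝ} (hW : Measurable[m'] W) (hY : Measurable[m'] Y)
    (hW₀ : ∀ x, 0 ≤ W x) (hWi : Integrable W μ) (hWY : Integrable (fun x => W x * Y x ^ 2) μ)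
    (hA : MemLp A 2 μ) (hindep : Indep m' (MeasurableSpace.comap A inferInstance) μ)
    (hA₀ : ∫ x, A x ∂μ = 0) :
    ∫ x, W x * (Y x + A x) ^ 2 ∂μ = ∫ x, W x * Y x ^ 2 ∂μ + (∫ x, W x ∂μ) * ∫ x, A x ^ 2 ∂μ := by
  have hWY₁ : Integrable (fun x => W x * Y x) μ :=
    integrable_mul_of_integrable_mul_sq (hW.mono hm' le_rfl).aestronglyMeasurable
      (hY.mono hm' le_rfl).aestronglyMeasurable hW₀ hWi hWY
  have hcross : IndepFun (fun x => W x * Y x) A μ :=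
    indepFun_comp_of_indep_comap hindep (hW.mul hY) measurable_id
  have hnoise : IndepFun W (fun x => A x ^ 2) μ :=
    indepFun_comp_of_indep_comap hindep hW (measurable_id.pow_const 2)
  have hcross_int : Integrable (fun x => W x * Y x * A x) μ :=
    hcross.integrable_mul hWY₁ (hA.integrable one_le_two)
  have hnoise_int : Integrable (fun x => W x * A x ^ 2) μ :=
    hnoise.integrable_mul hWi hA.integrable_sq
  calc ∫ x, W x * (Y x + A x) ^ 2 ∂μ
      = ∫ x, W x * Y x ^ 2 + 2 * (W x * Y x * A x) + W x * A x ^ 2 ∂μ := by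
        congr 1; funext x; ring
    _ = ∫ x, W x * Y x ^ 2 ∂μ + 2 * ∫ x, W x * Y x * A x ∂μ + ∫ x, W x * A x ^ 2 ∂μ := by
        have hfirst : Integrable (fun x => W x * Y x ^ 2 + 2 * (W x * Y x * A x)) μ :=
          hWY.add (hcross_int.const_mul 2)
        rw [integral_add hfirst hnoise_int,
          integral_add hWY (hcross_int.const_mul 2), integral_const_mul]
    _ = _ := by
        rw [hcross.integral_fun_mul_eq_mul_integral hWY₁.aestronglyMeasurable
            hA.aestronglyMeasurable,
          hnoise.integral_fun_mul_eq_mul_integral hWi.aestronglyMeasurable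
            hA.integrable_sq.aestronglyMeasurable, hA₀]
        ring

theorem integral_mul_sq_step [IsProbabilityMeasure μ] (hm : m ≤ m₀) {Q U S A W : Ω → ℝ}
    {p : ℝ} (hp : 0 ≤ p) (hQ : Measurable[m] Q) (hU : Measurable[m] U) (hW : Measurable[m] W)
    (hS : Measurable S) (hU01 : ∀ x, U x = 0 ∨ U x = 1) (hS01 : ∀ x, S x = 0 ∨ S x = 1)
    (hSindep : Indep m (MeasurableSpace.comap S inferInstance) μ)
    (hSp : μ {x | S x = 1} = ENNReal.ofReal p)
    (hW₀ : ∀ x, 0 ≤ W x) (hWi : Integrable W μ) (hWQ : Integrable (fun x => W x * Q x ^ 2) μ)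
    (hA : MemLp A 2 μ)
    (hAindep : Indep (m ⊔ MeasurableSpace.comap S inferInstance)
      (MeasurableSpace.comap A inferInstance) μ)
    (hA₀ : ∫ x, A x ∂μ = 0) :
    ∫ x, W x * ((1 - U x * S x) * Q x + A x) ^ 2 ∂μ
      = ∫ x, W x * Q x ^ 2 ∂μ - p * ∫ x, W x * Q x ^ 2 * U x ∂μ
        + (∫ x, W x ∂μ) * ∫ x, A x ^ 2 ∂μ := by
  set mS := MeasurableSpace.comap S inferInstance
  have hS' : Measurable[m ⊔ mS] S := (comap_measurable S).mono le_sup_right le_rfl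
  have hWQU : Integrable (fun x => W x * Q x ^ 2 * U x) μ :=
    hWQ.mul_bdd (hU.mono hm le_rfl).aestronglyMeasurable (ae_norm_le_one_of_zero_one hU01)
  have hWQUS : Integrable (fun x => W x * Q x ^ 2 * U x * S x) μ :=
    hWQU.mul_bdd hS.aestronglyMeasurable (ae_norm_le_one_of_zero_one hS01)
  have hY_sq : ∀ x, W x * ((1 - U x * S x) * Q x) ^ 2 = W x * Q x ^ 2 - W x * Q x ^ 2 * U x * S x :=
    fun x => by rcases hU01 x with h | h <;> rcases hS01 x with h' | h' <;> simp [h, h']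
  have hindS : IndepFun (fun x => W x * Q x ^ 2 * U x) S μ :=
    indepFun_comp_of_indep_comap hSindep ((hW.mul (hQ.pow_const 2)).mul hU) measurable_id
  have hY : Measurable[m ⊔ mS] (fun x => (1 - U x * S x) * Q x) :=
    (measurable_const.sub ((hU.mono le_sup_left le_rfl).mul hS')).mul (hQ.mono le_sup_left le_rfl)
  rw [integral_mul_add_sq_of_indep (sup_le hm hS.comap_le) (hW.mono le_sup_left le_rfl) hY hW₀
      hWi ((hWQ.sub hWQUS).congr (Eventually.of_forall fun x => (hY_sq x).symm)) hA hAindep hA₀,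
    integral_congr_ae (Eventually.of_forall hY_sq), integral_sub hWQ hWQUS,
    hindS.integral_fun_mul_eq_mul_integral hWQU.aestronglyMeasurable hS.aestronglyMeasurable,
    integral_eq_measureReal_of_zero_one hS hS01, measureReal_def, hSp, ENNReal.toReal_ofReal hp]
  ring

theorem integral_weighted_sq_step [IsProbabilityMeasure μ] (hm : m ≤ m₀)
    {Q U S A W : Ω → ℝ} {p π θ wbar : ℝ} (hp : 0 ≤ p)
    (hθ : p * π * (θ + wbar) = wbar) (hQ : Measurable[m] Q)
    (hQ₂ : Integrable (fun x => Q x ^ 2) μ) (hW : Measurable[m] W) (hW₀ : ∀ x, 0 ≤ W x)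
    (hWi : Integrable W μ) (hWmean : ∫ x, W x ∂μ = wbar) (hWQindep : IndepFun W Q μ)
    (hWQ : Integrable (fun x => W x * Q x ^ 2) μ) (hU : Measurable[m] U)
    (hU01 : ∀ x, U x = 0 ∨ U x = 1) (hS : Measurable S) (hS01 : ∀ x, S x = 0 ∨ S x = 1)
    (hSindep : Indep m (MeasurableSpace.comap S inferInstance) μ)
    (hSp : μ {x | S x = 1} = ENNReal.ofReal p) (hA : MemLp A 2 μ)
    (hAindep : Indep (m ⊔ MeasurableSpace.comap S inferInstance)
      (MeasurableSpace.comap A inferInstance) μ)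
    (hA₀ : ∫ x, A x ∂μ = 0) :
    ∫ x, W x * ((1 - U x * S x) * Q x + A x) ^ 2 ∂μ
        + θ * ∫ x, ((1 - U x * S x) * Q x + A x) ^ 2 ∂μ
      = θ * ∫ x, Q x ^ 2 ∂μ
        + (∫ x, (θ + W x) * p * Q x ^ 2 * π ∂μ - ∫ x, (θ + W x) * p * Q x ^ 2 * U x ∂μ)
        + (wbar + θ) * ∫ x, A x ^ 2 ∂μ := by
  have hW_step := integral_mul_sq_step hm hp hQ hU hW hS hU01 hS01 hSindep hSp hW₀ hWi hWQ hA
    hAindep hA₀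
  have h1_step := integral_mul_sq_step (W := fun _ => 1) hm hp hQ hU measurable_const hS hU01
    hS01 hSindep hSp (fun _ => zero_le_one) (integrable_const 1) (by simpa using hQ₂) hA
    hAindep hA₀
  simp only [one_mul, integral_const, probReal_univ, smul_eq_mul] at h1_step
  have hWQ_eq : ∫ x, W x * Q x ^ 2 ∂μ = wbar * ∫ x, Q x ^ 2 ∂μ := by
    rw [← hWmean]
    exact (hWQindep.comp measurable_id (measurable_id.pow_const 2)).integral_fun_mul_eq_mul_integral
      hWi.aestronglyMeasurable hQ₂.aestronglyMeasurable
  have hr_eq : ∫ x, (θ + W x) * p * Q x ^ 2 ∂μ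
      = p * (θ * ∫ x, Q x ^ 2 ∂μ + ∫ x, W x * Q x ^ 2 ∂μ) := by
    rw [← integral_const_mul, ← integral_add (hQ₂.const_mul θ) hWQ,
      ← integral_const_mul]
    exact integral_congr_ae (Eventually.of_forall fun x => by ring)
  have hU_bdd := ae_norm_le_one_of_zero_one (μ := μ) hU01
  have hU_meas := (hU.mono hm le_rfl).aestronglyMeasurable (μ := μ)
  have hQU : Integrable (fun x => θ * (Q x ^ 2 * U x)) μ :=
    (hQ₂.mul_bdd hU_meas hU_bdd).const_mul θ
  have hrU_eq : ∫ x, (θ + W x) * p * Q x ^ 2 * U x ∂μ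
      = p * (θ * ∫ x, Q x ^ 2 * U x ∂μ + ∫ x, W x * Q x ^ 2 * U x ∂μ) := by
    rw [← integral_const_mul, ← integral_add hQU (hWQ.mul_bdd hU_meas hU_bdd),
      ← integral_const_mul]
    exact integral_congr_ae (Eventually.of_forall fun x => by ring)
  rw [hW_step, h1_step, integral_mul_const, hr_eq, hrU_eq, hWQ_eq, hWmean]
  linear_combination -(∫ x, Q x ^ 2 ∂μ) * hθ

end OneSlot

section Drift

variable {Ω ι : Type*} [Fintype ι] {m m₀ : MeasurableSpace Ω} {μ : Measure Ω}
  [IsProbabilityMeasure μ]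

theorem sum_integral_weighted_sq_step_le (hm : m ≤ m₀) {K : ℕ} {p πs θ wbar : ι → ℝ}
    {Q U S A W : ι → Ω → ℝ} (hp : ∀ i, 0 ≤ p i) (hπ₀ : ∀ i, 0 ≤ πs i) (hπ₁ : ∀ i, πs i ≤ 1)
    (hπK : ∑ i, πs i ≤ K) (hθ₀ : ∀ i, 0 ≤ θ i)
    (hθ : ∀ i, p i * πs i * (θ i + wbar i) = wbar i)
    (hQ : ∀ i, Measurable[m] (Q i)) (hQ₂ : ∀ i, Integrable (fun x => Q i x ^ 2) μ)
    (hW : ∀ i, Measurable[m] (W i)) (hW₀ : ∀ i x, 0 ≤ W i x) (hWi : ∀ i, Integrable (W i) μ)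
    (hWmean : ∀ i, ∫ x, W i x ∂μ = wbar i) (hWQindep : ∀ i, IndepFun (W i) (Q i) μ)
    (hWQ : ∀ i, Integrable (fun x => W i x * Q i x ^ 2) μ)
    (hU : ∀ i, Measurable[m] (U i)) (hU01 : ∀ i x, U i x = 0 ∨ U i x = 1)
    (hUmax : ∀ᵐ x ∂μ, ∀ u : ι → ℝ, (∀ i, u i = 0 ∨ u i = 1) → (∑ i, u i) ≤ (K : ℝ) →
      (∑ i, (θ i + W i x) * p i * Q i x ^ 2 * u i)
        ≤ ∑ i, (θ i + W i x) * p i * Q i x ^ 2 * U i x)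
    (hS : ∀ i, Measurable (S i)) (hS01 : ∀ i x, S i x = 0 ∨ S i x = 1)
    (hSindep : ∀ i, Indep m (MeasurableSpace.comap (S i) inferInstance) μ)
    (hSp : ∀ i, μ {x | S i x = 1} = ENNReal.ofReal (p i))
    (hA : ∀ i, MemLp (A i) 2 μ)
    (hAindep : ∀ i, Indep (m ⊔ MeasurableSpace.comap (S i) inferInstance)
      (MeasurableSpace.comap (A i) inferInstance) μ)
    (hA₀ : ∀ i, ∫ x, A i x ∂μ = 0) :
    ∑ i, ∫ x, W i x * ((1 - U i x * S i x) * Q i x + A i x) ^ 2 ∂μ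
        + ∑ i, θ i * ∫ x, ((1 - U i x * S i x) * Q i x + A i x) ^ 2 ∂μ
      ≤ ∑ i, θ i * ∫ x, Q i x ^ 2 ∂μ + ∑ i, (wbar i + θ i) * ∫ x, A i x ^ 2 ∂μ := by
  set r : ι → Ω → ℝ := fun i x => (θ i + W i x) * p i * Q i x ^ 2
  have hr : ∀ i, Integrable (r i) μ := fun i =>
    (((hQ₂ i).const_mul (θ i)).add (hWQ i)).const_mul (p i) |>.congr
      (Eventually.of_forall fun x => by simp only [r, Pi.add_apply]; ring)
  have hrU : ∀ i, Integrable (fun x => r i x * U i x) μ := fun i =>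
    (hr i).mul_bdd ((hU i).mono hm le_rfl).aestronglyMeasurable
      (ae_norm_le_one_of_zero_one (hU01 i))
  have hmax_weight : ∫ x, ∑ i, r i x * πs i ∂μ ≤ ∫ x, ∑ i, r i x * U i x ∂μ := by
    refine integral_mono_ae (integrable_finsetSum _ fun i _ => (hr i).mul_const _)
      (integrable_finsetSum _ fun i _ => hrU i) ?_
    filter_upwards [hUmax] with x hx
    exact sum_mul_le_of_forall_zero_one_le
      (fun i => mul_nonneg (mul_nonneg (add_nonneg (hθ₀ i) (hW₀ i x)) (hp i)) (sq_nonneg _))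
      hπ₀ hπ₁ hπK hx
  rw [integral_finsetSum _ fun i _ => (hr i).mul_const _,
    integral_finsetSum _ fun i _ => hrU i] at hmax_weight
  rw [← sum_add_distrib]
  simp only [fun i => integral_weighted_sq_step hm (hp i) (hθ i) (hQ i) (hQ₂ i) (hW i)
    (hW₀ i) (hWi i) (hWmean i) (hWQindep i) (hWQ i) (hU i) (hU01 i) (hS i) (hS01 i) (hSindep i)
    (hSp i) (hA i) (hAindep i) (hA₀ i), sum_add_distrib, sum_sub_distrib]
  linarith

end Drift

theorem limsup_average_le_of_drift {a V : ℕ → ℝ} {B : ℝ} (ha : ∀ t, 0 ≤ a t)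
    (hV : ∀ t, 0 ≤ V t) (hdrift : ∀ t, a t + V (t + 1) ≤ V t + B) :
    limsup (fun T : ℕ => (T : ℝ)⁻¹ * ∑ t ∈ range T, a t) atTop ≤ B := by
  have hsum : ∀ T, ∑ t ∈ range T, a t ≤ V 0 + T * B := fun T => by
    have := sum_le_sum fun t (_ : t ∈ range T) =>
      show a t ≤ V t - V (t + 1) + B by linarith [hdrift t]
    rw [sum_add_distrib, sum_range_sub', sum_const, card_range, nsmul_eq_mul] at this
    linarith [hV T]
  have hlim : Tendsto (fun T : ℕ => V 0 / T + B) atTop (𝓝 B) := by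
    simpa using (tendsto_const_div_atTop_nhds_zero_nat (V 0)).add_const B
  refine (limsup_le_limsup ?_ ?_ hlim.isBoundedUnder_le).trans hlim.limsup_eq.le
  · filter_upwards [eventually_gt_atTop 0] with T hT
    calc (T : ℝ)⁻¹ * ∑ t ∈ range T, a t ≤ (T : ℝ)⁻¹ * (V 0 + T * B) := by gcongr; exact hsum T
      _ = V 0 / T + B := by field_simp
  · exact isCoboundedUnder_le_of_le atTop fun T =>
      mul_nonneg (by positivity) (sum_nonneg fun t _ => ha t)

theorem multi_terminal_UoI_bound_general {Ω : Type*} {m0 : MeasurableSpace Ω}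
    (μ : Measure Ω) [IsProbabilityMeasure μ]
    (N K : ℕ)
    (ℱ : Filtration ℕ m0)
    (p σ wbar πs θ : Fin N → ℝ)
    (hp : ∀ i, p i ∈ Set.Ioc (0 : ℝ) 1)
    (hwbar : ∀ i, 0 < wbar i) (hπs : ∀ i, πs i ∈ Set.Ioc (0 : ℝ) 1)
    (hπK : (∑ i, πs i) ≤ (K : ℝ))
    (hθ : ∀ i, θ i = wbar i * (1 - p i * πs i) / (p i * πs i))
    (Q w S A U : Fin N → ℕ → Ω → ℝ)
    (hQmeas : ∀ i t, Measurable[ℱ t] (Q i t))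
    (hwmeas : ∀ i t, Measurable[ℱ t] (w i (t + 1)))
    (hQ0 : ∀ i, MemLp (Q i 0) 2 μ)
    (hwpos : ∀ i t x, 0 ≤ w i t x)
    (hwint : ∀ i t, Integrable (w i t) μ)
    (hwmean : ∀ i t, (∫ x, w i t x ∂μ) = wbar i)
    (hwQindep : ∀ i t, IndepFun (w i (t + 1)) (Q i t) μ)
    (hwQint : ∀ i t, Integrable (fun x => w i (t + 1) x * Q i t x ^ 2) μ)
    (hSmeas : ∀ i t, Measurable (S i t))
    (hS01 : ∀ i t x, S i t x = 0 ∨ S i t x = 1)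
    (hSindep : ∀ i t, Indep (ℱ t) (MeasurableSpace.comap (S i t) inferInstance) μ)
    (hSp : ∀ i t, μ {x | S i t x = 1} = ENNReal.ofReal (p i))
    (hA2 : ∀ i t, MemLp (A i t) 2 μ)
    (hAindep : ∀ i t, Indep (ℱ t ⊔ MeasurableSpace.comap (S i t) inferInstance)
        (MeasurableSpace.comap (A i t) inferInstance) μ)
    (hAmean : ∀ i t, (∫ x, A i t x ∂μ) = 0)
    (hAvar : ∀ i t, (∫ x, A i t x ^ 2 ∂μ) = (σ i) ^ 2)
    (hUmeas : ∀ i t, Measurable[ℱ t] (U i t))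
    (hU01 : ∀ i t x, U i t x = 0 ∨ U i t x = 1)
    (hUmax : ∀ t, ∀ᵐ x ∂μ, ∀ u : Fin N → ℝ,
      (∀ i, u i = 0 ∨ u i = 1) → (∑ i, u i) ≤ (K : ℝ) →
      (∑ i, (θ i + w i (t + 1) x) * p i * Q i t x ^ 2 * u i)
        ≤ ∑ i, (θ i + w i (t + 1) x) * p i * Q i t x ^ 2 * U i t x)
    (hQdyn : ∀ i t x, Q i (t + 1) x = (1 - U i t x * S i t x) * Q i t x + A i t x) :
    limsup (fun T : ℕ => (1 / ((N : ℝ) * T)) *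
        ∑ t ∈ Finset.range T, ∑ i, ∫ x, w i (t + 1) x * Q i (t + 1) x ^ 2 ∂μ) atTop
      ≤ (1 / (N : ℝ)) * ∑ i, wbar i * σ i ^ 2 / (p i * πs i) := by
  have hpπ : ∀ i, 0 < p i * πs i := fun i => mul_pos (hp i).1 (hπs i).1
  have hθ₀ : ∀ i, 0 ≤ θ i := fun i => hθ i ▸ div_nonneg (mul_nonneg (hwbar i).le
    (sub_nonneg.mpr (mul_le_one₀ (hp i).2 (hπs i).1.le (hπs i).2))) (hpπ i).le
  have hθ_eq : ∀ i, p i * πs i * (θ i + wbar i) = wbar i := fun i => by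
    rw [hθ i]; field_simp [(hp i).1.ne', (hπs i).1.ne']; ring
  have hQ₂ : ∀ i t, MemLp (Q i t) 2 μ := fun i t => by
    induction t with
    | zero => exact hQ0 i
    | succ t ih =>
      rw [funext (hQdyn i t)]
      exact ih.one_sub_mul_mul_add (hA2 i t)
        ((hUmeas i t).mono (ℱ.le t) le_rfl).aestronglyMeasurable
        (hSmeas i t).aestronglyMeasurable (hU01 i t) (hS01 i t)
  have hdrift : ∀ t, ∑ i, ∫ x, w i (t + 1) x * Q i (t + 1) x ^ 2 ∂μ
      + ∑ i, θ i * ∫ x, Q i (t + 1) x ^ 2 ∂μ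
      ≤ ∑ i, θ i * ∫ x, Q i t x ^ 2 ∂μ + ∑ i, wbar i * σ i ^ 2 / (p i * πs i) := fun t => by
    have hnoise : ∀ i, wbar i * σ i ^ 2 + θ i * σ i ^ 2 = wbar i * σ i ^ 2 / (p i * πs i) :=
      fun i => by rw [hθ i]; field_simp [(hp i).1.ne', (hπs i).1.ne']; ring
    simpa only [← hQdyn, hAvar, add_mul, hnoise] using
      sum_integral_weighted_sq_step_le (ℱ.le t) (fun i => (hp i).1.le) (fun i => (hπs i).1.le)
      (fun i => (hπs i).2) hπK hθ₀ hθ_eq (hQmeas · t)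
      (fun i => (hQ₂ i t).integrable_sq) (hwmeas · t) (hwpos · (t + 1)) (hwint · (t + 1))
      (hwmean · (t + 1)) (hwQindep · t) (hwQint · t) (hUmeas · t) (hU01 · t) (hUmax t)
      (hSmeas · t) (hS01 · t) (hSindep · t) (hSp · t) (hA2 · t) (hAindep · t) (hAmean · t)
  have hN : (0 : ℝ) ≤ 1 / N := by positivity
  convert limsup_average_le_of_drift
    (a := fun t => 1 / N * ∑ i, ∫ x, w i (t + 1) x * Q i (t + 1) x ^ 2 ∂μ)
    (V := fun t => 1 / N * ∑ i, θ i * ∫ x, Q i t x ^ 2 ∂μ)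
    (fun t => mul_nonneg hN (sum_nonneg fun i _ => integral_nonneg fun x =>
      mul_nonneg (hwpos i (t + 1) x) (sq_nonneg _)))
    (fun t => mul_nonneg hN (sum_nonneg fun i _ => mul_nonneg (hθ₀ i) (integral_nonneg fun x =>
      sq_nonneg _)))
    (fun t => by simpa only [mul_add] using mul_le_mul_of_nonneg_left (hdrift t) hN)
    using 2
  funext T
  rw [← mul_sum]
  ring

/-- Theorem 2: with `θᵢ = ω̄ᵢ·(1 − pᵢ·πᵢ)/(pᵢ·πᵢ)` built from a feasible stationary
randomized scheme `π` (`πᵢ ∈ (0,1]`, `∑ πᵢ ≤ K`), the max-weight scheduling scheme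
(maximizing `∑ (θᵢ + ω_{i,t+1})·pᵢ·Q_{i,t}²·uᵢ` over `u ∈ {0,1}^N`, `∑ uᵢ ≤ K`)
attains average UoI
`limsup (1/(N·T)) ∑_{t<T} ∑ᵢ E[ω_{i,t+1}·Q_{i,t+1}²] ≤ (1/N) ∑ᵢ ω̄ᵢ·σᵢ²/(pᵢ·πᵢ)`. -/
theorem multi_terminal_UoI_bound {Ω : Type*} {m0 : MeasurableSpace Ω}
    (μ : Measure Ω) [IsProbabilityMeasure μ]
    (N K : ℕ) (hN : 1 ≤ N) (hK : 1 ≤ K)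
    (ℱ : Filtration ℕ m0)
    (p σ wbar πs θ : Fin N → ℝ)
    (hp : ∀ i, p i ∈ Set.Ioc (0 : ℝ) 1) (hσ : ∀ i, 0 < σ i)
    (hwbar : ∀ i, 0 < wbar i) (hπs : ∀ i, πs i ∈ Set.Ioc (0 : ℝ) 1)
    (hπK : (∑ i, πs i) ≤ (K : ℝ))
    (hθ : ∀ i, θ i = wbar i * (1 - p i * πs i) / (p i * πs i))
    (Q w S A U : Fin N → ℕ → Ω → ℝ)
    (hQmeas : ∀ i t, Measurable[ℱ t] (Q i t))
    (hwmeas : ∀ i t, Measurable[ℱ t] (w i (t + 1)))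
    (hQ0 : ∀ i, MemLp (Q i 0) 2 μ)
    (hwpos : ∀ i t x, 0 ≤ w i t x)
    (hwint : ∀ i t, Integrable (w i t) μ)
    (hwmean : ∀ i t, (∫ x, w i t x ∂μ) = wbar i)
    (hwQindep : ∀ i t, IndepFun (w i (t + 1)) (Q i t) μ)
    (hwQint : ∀ i t, Integrable (fun x => w i (t + 1) x * Q i t x ^ 2) μ)
    (hSmeas : ∀ i t, Measurable (S i t))
    (hS01 : ∀ i t x, S i t x = 0 ∨ S i t x = 1)
    (hSindep : ∀ i t, Indep (ℱ t) (MeasurableSpace.comap (S i t) inferInstance) μ)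
    (hSp : ∀ i t, μ {x | S i t x = 1} = ENNReal.ofReal (p i))
    (hAmeas : ∀ i t, Measurable (A i t)) (hA2 : ∀ i t, MemLp (A i t) 2 μ)
    (hAindep : ∀ i t, Indep (ℱ t ⊔ MeasurableSpace.comap (S i t) inferInstance)
        (MeasurableSpace.comap (A i t) inferInstance) μ)
    (hAmean : ∀ i t, (∫ x, A i t x ∂μ) = 0)
    (hAvar : ∀ i t, (∫ x, A i t x ^ 2 ∂μ) = (σ i) ^ 2)
    (hUmeas : ∀ i t, Measurable[ℱ t] (U i t))
    (hU01 : ∀ i t x, U i t x = 0 ∨ U i t x = 1)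
    (hUK : ∀ t x, (∑ i, U i t x) ≤ (K : ℝ))
    (hUmax : ∀ t, ∀ᵐ x ∂μ, ∀ u : Fin N → ℝ,
      (∀ i, u i = 0 ∨ u i = 1) → (∑ i, u i) ≤ (K : ℝ) →
      (∑ i, (θ i + w i (t + 1) x) * p i * Q i t x ^ 2 * u i)
        ≤ ∑ i, (θ i + w i (t + 1) x) * p i * Q i t x ^ 2 * U i t x)
    (hQdyn : ∀ i t x, Q i (t + 1) x = (1 - U i t x * S i t x) * Q i t x + A i t x) :
    limsup (fun T : ℕ => (1 / ((N : ℝ) * T)) *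
        ∑ t ∈ Finset.range T, ∑ i, ∫ x, w i (t + 1) x * Q i (t + 1) x ^ 2 ∂μ) atTop
      ≤ (1 / (N : ℝ)) * ∑ i, wbar i * σ i ^ 2 / (p i * πs i) :=
  multi_terminal_UoI_bound_general μ N K ℱ p σ wbar πs θ hp hwbar hπs hπK hθ Q w S A U hQmeas hwmeas
    hQ0 hwpos hwint hwmean hwQindep hwQint hSmeas hS01 hSindep hSp hA2 hAindep hAmean hAvar hUmeas
    hU01 hUmax hQdyn
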